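/- arXiv:2401.11319 — 3 statements merged into one kernel-verified Lean document; each statement's English description precedes it below -/
import Mathlib

section
/- Let Ψ : ℝⁿ → ℝⁿ and its inverse Ψ⁻¹ satisfy |Ψ⁻¹(x₁) - Ψ⁻¹(x₂)| ≤ (1 + Lε)|x₁ - x₂| for all x₁, x₂ and |Ψ⁻¹(0)| ≤ Lε. Suppose a function x : [0,∞) → ℝⁿ satisfies |Ψ(x(t))| ≤ β(|Ψ(x(0))|, t) + Δ for all t ≥ 0, where β is a class-KL function, and |Ψ(x₀)| ≤ (1 + Lε)|x₀| + Lε for all x₀. If Lε ≤ 1, then |x(t)| ≤ 2β(3|x(0)|, t) + (1+Lε)Δ + Lε + (1+Lε)β(3Lε, 0) for all t ≥ 0. -/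
/-- A class-KL function: continuous, class-K∞ in the first argument for each fixed
second argument, and decreasing to zero in the second argument. -/
def IsClassKL (β : ℝ → ℝ → ℝ) : Prop :=
  Continuous (Function.uncurry β) ∧
  (∀ s, StrictMonoOn (fun r => β r s) (Set.Ici 0)) ∧
  (∀ s, β 0 s = 0) ∧
  (∀ s, Filter.Tendsto (fun r => β r s) Filter.atTop Filter.atTop) ∧
  (∀ r, AntitoneOn (fun s => β r s) (Set.Ici 0)) ∧
  (∀ r, Filter.Tendsto (fun s => β r s) Filter.atTop (nhds 0))

theorem KL_bound_transfer_through_diffeomorphism {n : ℕ} (L ε Δ : ℝ)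
    (hL : 0 ≤ L) (hε : 0 ≤ ε) (hLε : L * ε ≤ 1)
    (Ψ Ψinv : EuclideanSpace ℝ (Fin n) → EuclideanSpace ℝ (Fin n))
    (hinv1 : Function.LeftInverse Ψinv Ψ) (hinv2 : Function.RightInverse Ψinv Ψ)
    (hΨinvLip : ∀ x₁ x₂, ‖Ψinv x₁ - Ψinv x₂‖ ≤ (1 + L*ε) * ‖x₁ - x₂‖)
    (hΨinv0 : ‖Ψinv 0‖ ≤ L*ε)
    (hΨbound : ∀ x₀, ‖Ψ x₀‖ ≤ (1 + L*ε) * ‖x₀‖ + L*ε)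
    (β : ℝ → ℝ → ℝ) (hβ : IsClassKL β)
    (x : ℝ → EuclideanSpace ℝ (Fin n))
    (hx : ∀ t, 0 ≤ t → ‖Ψ (x t)‖ ≤ β (‖Ψ (x 0)‖) t + Δ) :
    ∀ t, 0 ≤ t →
      ‖x t‖ ≤ 2 * β (3 * ‖x 0‖) t + (1 + L*ε) * Δ + L*ε + (1 + L*ε) * β (3*(L*ε)) 0 := by
  intro t ht
  set a := L * ε with ha
  have ha0 : 0 ≤ a := mul_nonneg hL hε
  obtain ⟨hcont, hmono, hzero, htend, hanti, htend0⟩ := hβ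
  have hβnn : ∀ u s, 0 ≤ u → 0 ≤ β u s := by
    intro u s hu
    have := (hmono s).monotoneOn (Set.self_mem_Ici) (Set.mem_Ici.mpr hu) hu
    simpa [hzero s] using this
  set r := ‖x 0‖ with hr
  have hr0 : (0:ℝ) ≤ r := norm_nonneg _
  -- step 1: bound ‖x t‖ via Ψinv Lipschitz
  have h1 : ‖x t‖ ≤ (1 + a) * ‖Ψ (x t)‖ + a := by
    calc ‖x t‖ = ‖Ψinv (Ψ (x t))‖ := by rw [hinv1]
      _ = ‖(Ψinv (Ψ (x t)) - Ψinv 0) + Ψinv 0‖ := by congr 1; abel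
      _ ≤ ‖Ψinv (Ψ (x t)) - Ψinv 0‖ + ‖Ψinv 0‖ := norm_add_le _ _
      _ ≤ (1 + a) * ‖Ψ (x t) - 0‖ + a := add_le_add (hΨinvLip _ _) hΨinv0
      _ = (1 + a) * ‖Ψ (x t)‖ + a := by rw [sub_zero]
  -- step 2: β (‖Ψ (x 0)‖) t ≤ β ((1+a)*r + a) t
  have hΨ0le : ‖Ψ (x 0)‖ ≤ (1 + a) * r + a := hΨbound _
  have hmem1 : ‖Ψ (x 0)‖ ∈ Set.Ici (0:ℝ) := Set.mem_Ici.mpr (norm_nonneg _)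
  have hmem2 : (1 + a) * r + a ∈ Set.Ici (0:ℝ) := by
    have : 0 ≤ (1 + a) * r := mul_nonneg (by linarith) hr0
    exact Set.mem_Ici.mpr (by linarith)
  have h2 : β (‖Ψ (x 0)‖) t ≤ β ((1 + a) * r + a) t :=
    (hmono t).monotoneOn hmem1 hmem2 hΨ0le
  -- case split
  have h3 : (1 + a) * β ((1 + a) * r + a) t ≤
      2 * β (3 * r) t + (1 + a) * β (3 * a) 0 := by
    rcases le_or_gt r a with hra | hra
    · -- r ≤ a : (1+a)r + a ≤ 3a, use antitone in t
      have hb1 : β ((1 + a) * r + a) t ≤ β (3 * a) t := by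
        apply (hmono t).monotoneOn hmem2 (Set.mem_Ici.mpr (by linarith))
        nlinarith
      have hb2 : β (3 * a) t ≤ β (3 * a) 0 :=
        hanti (3 * a) Set.self_mem_Ici (Set.mem_Ici.mpr ht) ht
      have hb3 : 0 ≤ β (3 * r) t := hβnn _ _ (by linarith)
      nlinarith [hβnn ((1+a)*r + a) t hmem2]
    · -- a < r : (1+a)r + a ≤ 3r
      have hb1 : β ((1 + a) * r + a) t ≤ β (3 * r) t := by
        apply (hmono t).monotoneOn hmem2 (Set.mem_Ici.mpr (by linarith))
        nlinarith
      have hb3 : 0 ≤ β (3 * a) 0 := hβnn _ _ (by linarith)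
      nlinarith [hβnn ((1+a)*r + a) t hmem2]
  have h4 := hx t ht
  have hΨnn : 0 ≤ ‖Ψ (x t)‖ := norm_nonneg _
  have h5 : ‖x t‖ ≤ (1 + a) * (β (‖Ψ (x 0)‖) t + Δ) + a := by
    have : (1 + a) * ‖Ψ (x t)‖ ≤ (1 + a) * (β (‖Ψ (x 0)‖) t + Δ) :=
      mul_le_mul_of_nonneg_left h4 (by linarith)
    linarith
  have h6 : (1 + a) * β (‖Ψ (x 0)‖) t ≤ (1 + a) * β ((1 + a) * r + a) t :=
    mul_le_mul_of_nonneg_left h2 (by linarith)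
  nlinarith
end

section
/- Let H(x) = |x - x*|² and h(s) = s + 3 sin(√s)² for s ≥ 0, and define J = h ∘ H on ℝⁿ. Then for all x ∈ ℝⁿ with H(x) > 0, the derivative factor h'(H(x)) = 1 + (3/2)·sin(2√H(x))/√H(x) satisfies 1/4 < h'(H(x)) < 4. -/
lemma sin_two_t_lower (t : ℝ) (ht : 0 < t) : -(t/2) < Real.sin (2*t) := by
  rcases lt_or_ge 2 t with h2 | h2
  · have := Real.neg_one_le_sin (2*t)
    linarith
  · rcases lt_or_ge (2*t) Real.pi with hpi | hpi
    · have := Real.sin_pos_of_pos_of_lt_pi (by linarith : 0 < 2*t) hpi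
      linarith
    · have hy : 0 ≤ 2*t - Real.pi := by linarith
      have h1 : Real.sin (2*t - Real.pi) ≤ 2*t - Real.pi := Real.sin_le hy
      have h2 : Real.sin (2*t - Real.pi) = -Real.sin (2*t) := Real.sin_sub_pi (2*t)
      have hpi3 : 3 < Real.pi := Real.pi_gt_three
      nlinarith

theorem derivative_factor_bounds :
    ∀ t : ℝ, 0 < t →
      1/4 < 1 + (3/2) * (Real.sin (2*t) / t) ∧
      1 + (3/2) * (Real.sin (2*t) / t) < 4 := by
  intro t ht
  have hlo : -(t/2) < Real.sin (2*t) := sin_two_t_lower t ht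
  have hhi : Real.sin (2*t) < 2*t := Real.sin_lt (by linarith)
  constructor
  · have : -(1/2 : ℝ) < Real.sin (2*t) / t := by
      rw [lt_div_iff₀ ht]; linarith
    linarith
  · have : Real.sin (2*t) / t < 2 := by
      rw [div_lt_iff₀ ht]; linarith
    linarith
end

section
/- Let J(x) = |x - x*|² + 3 sin(|x - x*|)² + 1 on ℝⁿ. Then there exists μ > 0 such that |∇J(x)|² ≥ 4μ²|x - x*|² for all x ∈ ℝⁿ; consequently ∇J(x) = 0 if and only if x = x*, and x* is the unique global minimizer of J. -/
/-!
With `r = ‖x - xs‖`, the cost is the radial function `J x = φ r` for the even profile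
`φ t = t² + 3 sin² t + 1`. Away from `xs` its gradient is `φ' r` times the unit vector
`(x - xs) / r`, so `‖∇J x‖ = |φ' r|`, and `φ' r = 2r + 3 sin 2r ≥ r / 2` because
`sin s ≥ -s/4` for `s ≥ 0`. At `xs` the gradient vanishes since `φ' 0 = 0`. Hence
`‖∇J x‖ ≥ ‖x - xs‖ / 2`, which is the bound with `μ = 1/4` and forces `∇J x = 0 ↔ x = xs`.
-/

open Real

section Radial

variable {E : Type*} [NormedAddCommGroup E] [InnerProductSpace ℝ E] [CompleteSpace E]

theorem HasDerivAt.comp_hasGradientAt {f : E → ℝ} {g x : E} {φ : ℝ → ℝ} {φ' : ℝ}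
    (hφ : HasDerivAt φ φ' (f x)) (hf : HasGradientAt f g x) :
    HasGradientAt (fun z => φ (f z)) (φ' • g) x := by
  rw [hasGradientAt_iff_hasFDerivAt] at hf ⊢
  refine (hφ.comp_hasFDerivAt x hf).congr_fderiv ?_
  ext v
  simp

theorem hasGradientAt_norm_sub {a x : E} (hx : x ≠ a) :
    HasGradientAt (fun z => ‖z - a‖) (‖x - a‖⁻¹ • (x - a)) x := by
  have hr : 0 < ‖x - a‖ := norm_pos_iff.mpr (sub_ne_zero.mpr hx)
  have hsqrt : HasDerivAt sqrt (2 * ‖x - a‖)⁻¹ (‖x - a‖ ^ 2) := by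
    simpa [sqrt_sq hr.le, one_div] using hasDerivAt_sqrt (pow_pos hr 2).ne'
  have hnorm_sq : HasGradientAt (fun z => ‖z - a‖ ^ 2) ((2 : ℝ) • (x - a)) x := by
    rw [hasGradientAt_iff_hasFDerivAt]
    refine ((hasFDerivAt_id x).sub_const a).norm_sq.congr_fderiv ?_
    ext v
    simp
  convert hsqrt.comp_hasGradientAt (f := fun z => ‖z - a‖ ^ 2) hnorm_sq using 1
  · simp
  · rw [smul_smul]
    congr 1
    field_simp

theorem hasGradientAt_comp_norm_sub {φ : ℝ → ℝ} {φ' : ℝ} {a x : E} (hx : x ≠ a)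
    (hφ : HasDerivAt φ φ' ‖x - a‖) :
    HasGradientAt (fun z => φ ‖z - a‖) (φ' • ‖x - a‖⁻¹ • (x - a)) x :=
  hφ.comp_hasGradientAt (f := fun z => ‖z - a‖) (hasGradientAt_norm_sub hx)

theorem hasGradientAt_comp_norm_sub_self {φ : ℝ → ℝ} (a : E) (hφ : HasDerivAt φ 0 0) :
    HasGradientAt (fun z => φ ‖z - a‖) 0 a := by
  rw [hasDerivAt_iff_isLittleO] at hφ
  rw [hasGradientAt_iff_isLittleO]
  simpa [Function.comp_def] using (hφ.comp_tendsto (tendsto_norm_sub_self a)).norm_right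

end Radial

theorem neg_div_four_le_sin {s : ℝ} (hs : 0 ≤ s) : -(s / 4) ≤ sin s := by
  rcases le_or_gt s π with hπ | hπ
  · linarith [sin_nonneg_of_nonneg_of_le_pi hs hπ]
  rcases le_or_gt s (4 * π / 3) with h4π | h4π
  · -- on `[π, 4π/3]`: `sin s = -sin (s - π) ≥ π - s ≥ -s/4`
    have := sin_le (x := s - π) (by linarith)
    rw [sin_sub_pi] at this
    linarith
  · linarith [neg_one_le_sin s, pi_gt_three]

noncomputable def costProfile (t : ℝ) : ℝ := t ^ 2 + 3 * sin t ^ 2 + 1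

theorem hasDerivAt_costProfile (t : ℝ) :
    HasDerivAt costProfile (2 * t + 3 * sin (2 * t)) t := by
  have h := ((hasDerivAt_pow 2 t).add (((hasDerivAt_sin t).fun_pow 2).const_mul 3)).add_const 1
  refine h.congr_deriv ?_
  rw [sin_two_mul]
  ring

theorem half_le_deriv_costProfile {t : ℝ} (ht : 0 ≤ t) : t / 2 ≤ 2 * t + 3 * sin (2 * t) := by
  linarith [neg_div_four_le_sin (by linarith : 0 ≤ 2 * t)]

theorem costProfile_zero_lt {t : ℝ} (ht : t ≠ 0) : costProfile 0 < costProfile t := by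
  unfold costProfile
  simp only [sin_zero]
  nlinarith [sq_pos_of_ne_zero ht, sq_nonneg (sin t)]

section CostProfile

variable {E : Type*} [NormedAddCommGroup E] [InnerProductSpace ℝ E] [CompleteSpace E]

theorem gradient_costProfile_norm_sub_self (a : E) :
    gradient (fun z => costProfile ‖z - a‖) a = 0 :=
  (hasGradientAt_comp_norm_sub_self a (by simpa using hasDerivAt_costProfile 0)).gradient

theorem half_norm_sub_le_norm_gradient_costProfile (a x : E) :
    ‖x - a‖ / 2 ≤ ‖gradient (fun z => costProfile ‖z - a‖) x‖ := by
  rcases eq_or_ne x a with rfl | hx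
  · simp
  have hr : 0 < ‖x - a‖ := norm_pos_iff.mpr (sub_ne_zero.mpr hx)
  rw [(hasGradientAt_comp_norm_sub hx (hasDerivAt_costProfile _)).gradient, norm_smul,
    norm_smul, norm_inv, norm_norm, inv_mul_cancel₀ hr.ne', mul_one, Real.norm_eq_abs]
  exact (half_le_deriv_costProfile hr.le).trans (le_abs_self _)

end CostProfile

theorem nonconvex_cost_gradient_lower_bound {n : ℕ} (xs : EuclideanSpace ℝ (Fin n))
    (J : EuclideanSpace ℝ (Fin n) → ℝ)
    (hJ : ∀ x, J x = ‖x - xs‖ ^ 2 + 3 * Real.sin ‖x - xs‖ ^ 2 + 1) :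
    ∃ μ > (0:ℝ),
      (∀ x, 4 * μ ^ 2 * ‖x - xs‖ ^ 2 ≤ ‖gradient J x‖ ^ 2) ∧
      (∀ x, gradient J x = 0 ↔ x = xs) ∧
      (∀ x, x ≠ xs → J xs < J x) := by
  have hJ' : J = fun z => costProfile ‖z - xs‖ := funext hJ
  subst hJ'
  have hbound := half_norm_sub_le_norm_gradient_costProfile xs
  refine ⟨1 / 4, by norm_num, fun x => ?_, fun x => ⟨fun h => ?_, ?_⟩, fun x hx => ?_⟩
  · calc 4 * (1 / 4) ^ 2 * ‖x - xs‖ ^ 2 = (‖x - xs‖ / 2) ^ 2 := by ring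
      _ ≤ _ := pow_le_pow_left₀ (by positivity) (hbound x) 2
  · have hx := hbound x
    rw [h, norm_zero] at hx
    exact sub_eq_zero.mp (norm_le_zero_iff.mp (by linarith))
  · rintro rfl
    exact gradient_costProfile_norm_sub_self x
  · simpa using costProfile_zero_lt (norm_ne_zero_iff.mpr (sub_ne_zero.mpr hx))
end
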